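/- Strong duality value for the DP dual: there exists a feasible dual solution achieving the optimal primal value. That is, there exists λ: S × A × [T] → ℝ with λ ≥ 0, Σ_a λ(s₀,a,0) ≤ 1, Σ_a λ(s̄,a,t̄) ≤ Σ_{(s,a): a(s)=s̄} λ(s,a,t̄-1) for all (s̄,t̄) ≠ (s₀,0), such that Σ_{s,a,t} r(s,a,t)·λ(s,a,t) = V*(s₀,0), where V* is the backward-induction optimal value function. (Such a λ can be taken as the indicator of the optimal trajectory from s₀.) -/
import Mathlib


/-- strong duality value for the DP dual LP. -/
theorem dp_strong_duality {S A : Type} [Fintype S] [Fintype A] [Nonempty S] [Nonempty A]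
    [DecidableEq S]
    (T : ℕ) (hT : 0 < T) (s₀ : S) (act : A → S → S)
    (r : S → A → ℕ → ℝ) (hr : ∀ s a t, t < T → 0 ≤ r s a t)
    (V : ℕ → S → ℝ)
    (hVT : ∀ s, V T s = 0)
    (hVBell : ∀ t < T, ∀ s, V t s =
      Finset.univ.sup' Finset.univ_nonempty
        (fun a => r s a t + V (t + 1) (act a s))) :
    ∃ lam : S → A → ℕ → ℝ,
      (∀ s a t, 0 ≤ lam s a t) ∧
      (∑ a, lam s₀ a 0 ≤ 1) ∧
      (∀ sb : S, sb ≠ s₀ → ∑ a, lam sb a 0 ≤ 0) ∧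
      (∀ sb : S, ∀ t, t + 1 < T →
        ∑ a, lam sb a (t + 1) ≤
          ∑ p ∈ Finset.univ.filter (fun p : S × A => act p.2 p.1 = sb), lam p.1 p.2 t) ∧
      ∑ s, ∑ a, ∑ t ∈ Finset.range T, r s a t * lam s a t = V 0 s₀ := by
  classical
  have hargmax : ∀ (s : S) (t : ℕ), ∃ a : A,
      Finset.univ.sup' Finset.univ_nonempty (fun a => r s a t + V (t+1) (act a s))
        = r s a t + V (t+1) (act a s) := by
    intro s t
    obtain ⟨a, -, ha⟩ := Finset.exists_mem_eq_sup' (Finset.univ_nonempty (α := A))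
      (fun a => r s a t + V (t+1) (act a s))
    exact ⟨a, ha⟩
  choose amax hamax using hargmax
  let σ : ℕ → S := fun t => Nat.rec s₀ (fun k s => act (amax s k) s) t
  have hσ0 : σ 0 = s₀ := rfl
  let α : ℕ → A := fun t => amax (σ t) t
  have hσsucc : ∀ t, σ (t+1) = act (α t) (σ t) := fun t => rfl
  set lam : S → A → ℕ → ℝ :=
    fun s a t => @ite ℝ (t < T ∧ s = σ t ∧ a = α t) (Classical.propDecidable _) 1 0 with hlam
  have hnn : ∀ s a t, 0 ≤ lam s a t := by
    intro s a t
    simp only [hlam]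
    split <;> norm_num
  have key : ∀ n t, t + n = T → V t (σ t) = ∑ i ∈ Finset.Ico t T, r (σ i) (α i) i := by
    intro n
    induction n with
    | zero =>
      intro t ht
      have : t = T := by omega
      subst this
      simp [hVT]
    | succ n ih =>
      intro t ht
      have htT : t < T := by omega
      rw [hVBell t htT, hamax (σ t) t, Finset.sum_eq_sum_Ico_succ_bot htT]
      have h2 := ih (t+1) (by omega)
      rw [show act (amax (σ t) t) (σ t) = σ (t+1) from rfl, h2]
  refine ⟨lam, hnn, ?_, ?_, ?_, ?_⟩
  · have h1 : (∑ a, lam s₀ a 0) = 1 := by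
      simp [hlam, hT, hσ0]
    rw [h1]
  · intro sb hsb
    have h0 : (∑ a, lam sb a 0) = 0 := by
      simp [hlam, hσ0, hsb]
    rw [h0]
  · intro sb t ht
    by_cases hb : sb = σ (t+1)
    · have hL : (∑ a, lam sb a (t+1)) = 1 := by
        simp [hlam, ht, hb]
      rw [hL]
      have hmem : (σ t, α t) ∈ Finset.univ.filter (fun p : S × A => act p.2 p.1 = sb) := by
        simp [hb, (hσsucc t).symm]
      have h1 : lam (σ t) (α t) t = 1 := by
        simp [hlam, show t < T by omega]
      calc (1 : ℝ) = lam (σ t) (α t) t := h1.symm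
        _ ≤ ∑ p ∈ Finset.univ.filter (fun p : S × A => act p.2 p.1 = sb), lam p.1 p.2 t :=
          Finset.single_le_sum (fun p _ => hnn p.1 p.2 t) hmem
    · have hL : (∑ a, lam sb a (t+1)) = 0 := by
        simp [hlam, hb]
      rw [hL]
      exact Finset.sum_nonneg fun p _ => hnn p.1 p.2 t
  · have hswap : (∑ s, ∑ a, ∑ t ∈ Finset.range T, r s a t * lam s a t)
        = ∑ t ∈ Finset.range T, ∑ s, ∑ a, r s a t * lam s a t := by
      calc (∑ s, ∑ a, ∑ t ∈ Finset.range T, r s a t * lam s a t)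
          = ∑ s, ∑ t ∈ Finset.range T, ∑ a, r s a t * lam s a t :=
            Finset.sum_congr rfl (fun s _ => Finset.sum_comm)
        _ = ∑ t ∈ Finset.range T, ∑ s, ∑ a, r s a t * lam s a t := Finset.sum_comm
    rw [hswap]
    have hterm : ∀ t ∈ Finset.range T,
        (∑ s, ∑ a, r s a t * lam s a t) = r (σ t) (α t) t := by
      intro t htm
      have htT : t < T := Finset.mem_range.mp htm
      have hsplit : ∀ (x : S) (x1 : A),
          (r x x1 t * lam x x1 t)
            = @ite ℝ (x = σ t) (Classical.propDecidable _)
                (@ite ℝ (x1 = α t) (Classical.propDecidable _) (r x x1 t) 0) 0 := by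
        intro x x1
        rcases Classical.em (x = σ t) with h1 | h1 <;>
          rcases Classical.em (x1 = α t) with h2 | h2 <;>
          simp [hlam, h1, h2, htT]
      simp only [hsplit]
      rw [Finset.sum_eq_single_of_mem (σ t) (Finset.mem_univ _)
        (fun b _ hb => by simp [hb])]
      rw [Finset.sum_eq_single_of_mem (α t) (Finset.mem_univ _)
        (fun b _ hb => by simp [hb])]
      simp
    rw [Finset.sum_congr rfl hterm]
    have hk := key T 0 (by omega)
    rw [hσ0] at hk
    rw [Finset.range_eq_Ico, ← hk]
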